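/- Let m > 1, n ≥ 2 an integer, and R, Q > 0. Let ψ be the solution of ψ'' = wψ on (0,∞) with ψ(0)=0, ψ'(0)=1, where w(r) = 0 on [0,R], w(r) = Q(2R)²(r−R)/R on (R,2R], and w(r) = Q r² for r > 2R. Then there exists R̄ > 0 depending only on n, m, R, Q such that for every R₀ ≥ R̄ the following holds. Let E > 0 satisfy (n−1)ψ'(r)·r/ψ(r) ≥ E for all r ∈ (0, R₀), and suppose also (n−1)ψ'(r)/(ψ(r)r²) − 1/r² ≥ (n−1)√(Q/2)/r for all r ≥ R₀ (equivalently the μ=1 form of the outer condition). Suppose t₀ > exp(R₀²), κ ≥ max{ [2/(m(n−1)√(Q/2))]^{1/(m−1)}, [2R₀²/(m(E+1))]^{1/(m−1)} }, and η ≥ (1/2)·max{ log(2mκ^{m−1}/(m−1)), 2mκ^{m−1}/((m−1)[m(E+1)κ^{m−1} − R₀²]) }. Define Ū(r,t) for t ≥ 0 by (t+t₀)^{1/(m−1)} Ū(r,t) = κ[η + (1/2)log log(t+t₀) − log r]₊^{1/(m−1)} for r ≥ R₀, and (t+t₀)^{1/(m−1)} Ū(r,t) = κ[η + (1/2)log log(t+t₀)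 − r²/(2R₀²) − log R₀ + 1/2]₊^{1/(m−1)} for 0 < r < R₀. Then at every point (r,t) ∈ ((0,∞)∖{R₀}) × (0,∞) at which Ū(r,t) > 0, the pointwise supersolution inequality ∂_t Ū ≥ ∂²_{rr}(Ū^m) + (n−1)(ψ'(r)/ψ(r)) ∂_r(Ū^m) holds. -/

import Mathlib

/-- The critical (`μ = 1`) upper barrier `Ū(r,t)` of Lemma 5.1 of the paper:
`(t+t₀)^{1/(m-1)} Ū(r,t) = κ [η + (1/2) log log(t+t₀) - log r]₊^{1/(m-1)}` for `r ≥ R₀`,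
and `κ [η + (1/2) log log(t+t₀) - r²/(2R₀²) - log R₀ + 1/2]₊^{1/(m-1)}` for `r < R₀`. -/
noncomputable def UbarCrit (m R₀ t₀ κ η : ℝ) (r t : ℝ) : ℝ :=
  (if R₀ ≤ r then
      κ * (max (η + Real.log (Real.log (t + t₀)) / 2 - Real.log r) 0) ^ (1 / (m - 1))
    else
      κ * (max (η + Real.log (Real.log (t + t₀)) / 2 - r ^ 2 / (2 * R₀ ^ 2)
            - Real.log R₀ + 1 / 2) 0) ^ (1 / (m - 1)))
    / (t + t₀) ^ (1 / (m - 1))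


lemma hd_out1 {C A p x : ℝ} (hx : 0 < x) (hG : 0 < A - Real.log x) :
    HasDerivAt (fun y => C * (A - Real.log y) ^ (p+1))
      (-(C * (p+1) * (A - Real.log x) ^ p / x)) x := by
  have h0 : HasDerivAt (fun y => A - Real.log y) (-x⁻¹) x :=
    (Real.hasDerivAt_log hx.ne').const_sub A
  have h1 := (h0.rpow_const (p := p+1) (Or.inl hG.ne')).const_mul C
  refine h1.congr_deriv ?_
  rw [add_sub_cancel_right]
  field_simp

lemma hd_out2 {C A p x : ℝ} (hx : 0 < x) (hG : 0 < A - Real.log x) :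
    HasDerivAt (fun y => -(C * (p+1) * (A - Real.log y) ^ p / y))
      (C * (p+1) * (p * (A - Real.log x) ^ (p-1) + (A - Real.log x) ^ p) / x^2) x := by
  have h0 : HasDerivAt (fun y => A - Real.log y) (-x⁻¹) x :=
    (Real.hasDerivAt_log hx.ne').const_sub A
  have h1 := (h0.rpow_const (p := p) (Or.inl hG.ne')).const_mul (C*(p+1))
  have h2 := (h1.div (hasDerivAt_id x) hx.ne').neg
  refine h2.congr_deriv ?_
  simp only [id]
  field_simp
  ring

lemma hd_time {κ p t₀ c η t : ℝ} (hT : 0 < t + t₀) (hL : 0 < Real.log (t+t₀))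
    (hG : 0 < η + Real.log (Real.log (t+t₀))/2 - c) :
    HasDerivAt (fun s => κ * (η + Real.log (Real.log (s+t₀))/2 - c) ^ p / (s+t₀) ^ p)
      (κ * p * ((η + Real.log (Real.log (t+t₀))/2 - c) ^ (p-1) / (2*Real.log (t+t₀))
        - (η + Real.log (Real.log (t+t₀))/2 - c) ^ p) / (t+t₀) ^ (p+1)) t := by
  have hs : HasDerivAt (fun s : ℝ => s + t₀) 1 t := (hasDerivAt_id t).add_const t₀
  have hlog1 : HasDerivAt (fun s => Real.log (s+t₀)) (1/(t+t₀)) t := hs.log hT.ne'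
  have hlog2 := hlog1.log hL.ne'
  have hΓ := ((hlog2.div_const 2).const_add η).sub_const c
  have hnum := (hΓ.rpow_const (p := p) (Or.inl hG.ne')).const_mul κ
  have hden := hs.rpow_const (p := p) (Or.inl hT.ne')
  have hdiv := hnum.div hden (Real.rpow_pos_of_pos hT p).ne'
  refine hdiv.congr_deriv ?_
  have e1 : (t+t₀)^(p-1) = (t+t₀)^p / (t+t₀) := by
    rw [Real.rpow_sub hT, Real.rpow_one]
  have e2 : (t+t₀)^(p+1) = (t+t₀)^p * (t+t₀) := by
    rw [Real.rpow_add hT, Real.rpow_one]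
  have e3 : (η + Real.log (Real.log (t+t₀))/2 - c)^(p-1)
      = (η + Real.log (Real.log (t+t₀))/2 - c)^p / (η + Real.log (Real.log (t+t₀))/2 - c) := by
    rw [Real.rpow_sub hG, Real.rpow_one]
  rw [e1, e2, e3]
  generalize (η + Real.log (Real.log (t+t₀))/2 - c) ^ p = Y
  generalize hXd : (t+t₀) ^ p = X
  generalize hΓd : η + Real.log (Real.log (t+t₀))/2 - c = Γ at hG
  generalize hLd : Real.log (t+t₀) = L at hL
  have hX : X ≠ 0 := by rw [← hXd]; exact (Real.rpow_pos_of_pos hT p).ne'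
  field_simp

lemma outer_assembly (m κ Kq X T1 G r Lg D : ℝ) (hm1 : m - 1 ≠ 0)
    (hG : G ≠ 0) (hr : r ≠ 0) (hT1 : T1 ≠ 0) (hLg : Lg ≠ 0) :
    (Kq*κ/T1 * (1/(m-1)+1) * (1/(m-1) * (X/G) + X) / r^2
        + D * -(Kq*κ/T1 * (1/(m-1)+1) * X / r)
      = (κ * (1/(m-1)) * (X/G) / T1)
        * ((Kq*m)*((1/(m-1)+G)/r^2 - D*G/r)))
    ∧ (κ * (1/(m-1)) * ((X/G)/(2*Lg) - X) / T1
      = (κ * (1/(m-1)) * (X/G) / T1) * (1/(2*Lg) - G)) := by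
  constructor
  · field_simp
    ring
  · field_simp

set_option maxHeartbeats 1000000 in
lemma outer_region
    (m : ℝ) (hm : 1 < m) (n : ℕ)
    (ψ ψ' : ℝ → ℝ)
    (R₀ : ℝ)
    (t₀ κ η : ℝ) (hκpos : 0 < κ)
    (r t : ℝ) (hr : 0 < r) (hgt : R₀ < r)
    (hT : 0 < t + t₀) (hLpos : 0 < Real.log (t+t₀))
    (hGpos : 0 < η + Real.log (Real.log (t + t₀)) / 2 - Real.log r)
    (main : (κ^(m-1)*m)*((1/(m-1)+(η + Real.log (Real.log (t + t₀)) / 2 - Real.log r))/r^2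
        - (((n:ℝ)-1)*(ψ' r/ψ r))*(η + Real.log (Real.log (t + t₀)) / 2 - Real.log r)/r)
        ≤ 1/(2*Real.log (t+t₀)) - (η + Real.log (Real.log (t + t₀)) / 2 - Real.log r)) :
    deriv (deriv (fun x => (UbarCrit m R₀ t₀ κ η x t) ^ m)) r
      + ((n : ℝ) - 1) * (ψ' r / ψ r)
        * deriv (fun x => (UbarCrit m R₀ t₀ κ η x t) ^ m) r
      ≤ deriv (fun s => UbarCrit m R₀ t₀ κ η r s) t := by
  have hm1 : (0:ℝ) < m - 1 := by linarith
  have hm1' : m - 1 ≠ 0 := hm1.ne'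
  have hp : (0:ℝ) < 1/(m-1) := by positivity
  -- eventually facts
  have ev1 : ∀ᶠ x in nhds r, R₀ < x := eventually_gt_nhds hgt
  have ev2 : ∀ᶠ x in nhds r, (0:ℝ) < x := eventually_gt_nhds hr
  have hcont : ContinuousAt (fun x : ℝ => η + Real.log (Real.log (t + t₀)) / 2 - Real.log x) r :=
    continuousAt_const.sub (Real.continuousAt_log hr.ne')
  have ev3 : ∀ᶠ x in nhds r, 0 < η + Real.log (Real.log (t + t₀)) / 2 - Real.log x :=
    hcont.eventually (eventually_gt_nhds hGpos)
  -- spatial eventual equality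
  have heq : (fun x => (UbarCrit m R₀ t₀ κ η x t) ^ m) =ᶠ[nhds r]
      (fun x => (κ^m/(t+t₀)^(1/(m-1)+1))
        * (η + Real.log (Real.log (t + t₀)) / 2 - Real.log x) ^ (1/(m-1)+1)) := by
    filter_upwards [ev1, ev3] with x hx1 hx3
    show (UbarCrit m R₀ t₀ κ η x t) ^ m = _
    unfold UbarCrit
    rw [if_pos hx1.le, max_eq_left hx3.le]
    rw [Real.div_rpow (mul_nonneg hκpos.le (Real.rpow_nonneg hx3.le _)) (Real.rpow_nonneg hT.le _)]
    rw [Real.mul_rpow hκpos.le (Real.rpow_nonneg hx3.le _)]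
    rw [← Real.rpow_mul hx3.le, ← Real.rpow_mul hT.le]
    rw [show (1/(m-1))*m = 1/(m-1)+1 by field_simp; ring]
    ring
  have hder1ev : ∀ᶠ x in nhds r, deriv (fun y => (UbarCrit m R₀ t₀ κ η y t) ^ m) x
      = -((κ^m/(t+t₀)^(1/(m-1)+1)) * (1/(m-1)+1)
          * (η + Real.log (Real.log (t + t₀)) / 2 - Real.log x) ^ (1/(m-1)) / x) := by
    filter_upwards [heq.eventually_nhds, ev2, ev3] with x hx hx2 hx3
    exact (Filter.EventuallyEq.deriv_eq hx).trans (hd_out1 hx2 hx3).deriv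
  have hdd : deriv (deriv (fun x => (UbarCrit m R₀ t₀ κ η x t) ^ m)) r
      = (κ^m/(t+t₀)^(1/(m-1)+1)) * (1/(m-1)+1)
        * ((1/(m-1)) * (η + Real.log (Real.log (t + t₀)) / 2 - Real.log r) ^ (1/(m-1)-1)
          + (η + Real.log (Real.log (t + t₀)) / 2 - Real.log r) ^ (1/(m-1))) / r^2 := by
    rw [Filter.EventuallyEq.deriv_eq hder1ev]
    exact (hd_out2 hr hGpos).deriv
  have hd1 : deriv (fun x => (UbarCrit m R₀ t₀ κ η x t) ^ m) r
      = -((κ^m/(t+t₀)^(1/(m-1)+1)) * (1/(m-1)+1)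
          * (η + Real.log (Real.log (t + t₀)) / 2 - Real.log r) ^ (1/(m-1)) / r) :=
    heq.deriv_eq.trans (hd_out1 hr hGpos).deriv
  -- time derivative
  have hs : HasDerivAt (fun s : ℝ => s + t₀) 1 t := (hasDerivAt_id t).add_const t₀
  have hΓc : ContinuousAt
      (fun s => η + Real.log (Real.log (s+t₀))/2 - Real.log r) t :=
    ((((hs.log hT.ne').log hLpos.ne').div_const 2).const_add η).sub_const
      (Real.log r) |>.continuousAt
  have ev4 : ∀ᶠ s in nhds t, 0 < η + Real.log (Real.log (s+t₀))/2 - Real.log r :=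
    hΓc.eventually (eventually_gt_nhds hGpos)
  have heqT : (fun s => UbarCrit m R₀ t₀ κ η r s) =ᶠ[nhds t]
      (fun s => κ * (η + Real.log (Real.log (s+t₀))/2 - Real.log r) ^ (1/(m-1))
        / (s+t₀) ^ (1/(m-1))) := by
    filter_upwards [ev4] with s hs4
    show UbarCrit m R₀ t₀ κ η r s = _
    unfold UbarCrit
    rw [if_pos hgt.le, max_eq_left hs4.le]
  have hdT : deriv (fun s => UbarCrit m R₀ t₀ κ η r s) t
      = κ * (1/(m-1)) * ((η + Real.log (Real.log (t + t₀)) / 2 - Real.log r) ^ (1/(m-1)-1)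
          / (2*Real.log (t+t₀))
        - (η + Real.log (Real.log (t + t₀)) / 2 - Real.log r) ^ (1/(m-1)))
        / (t+t₀) ^ (1/(m-1)+1) :=
    heqT.deriv_eq.trans (hd_time hT hLpos hGpos).deriv
  -- assembly
  have hκm : κ^m = κ^(m-1)*κ := by
    rw [show κ^m = κ^((m-1)+1) by norm_num, Real.rpow_add_one hκpos.ne']
  have hGp : (η + Real.log (Real.log (t + t₀)) / 2 - Real.log r) ^ (1/(m-1)-1)
      = (η + Real.log (Real.log (t + t₀)) / 2 - Real.log r) ^ (1/(m-1))
        / (η + Real.log (Real.log (t + t₀)) / 2 - Real.log r) := by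
    rw [Real.rpow_sub hGpos, Real.rpow_one]
  have hXpos : 0 < (η + Real.log (Real.log (t + t₀)) / 2 - Real.log r) ^ (1/(m-1)) :=
    Real.rpow_pos_of_pos hGpos _
  have hTpos : 0 < (t+t₀) ^ (1/(m-1)+1) := Real.rpow_pos_of_pos hT _
  have hfac : 0 ≤ κ * (1/(m-1))
      * ((η + Real.log (Real.log (t + t₀)) / 2 - Real.log r) ^ (1/(m-1))
        / (η + Real.log (Real.log (t + t₀)) / 2 - Real.log r))
      / (t+t₀) ^ (1/(m-1)+1) := by positivity
  have easm := outer_assembly m κ (κ^(m-1))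
    ((η + Real.log (Real.log (t + t₀)) / 2 - Real.log r) ^ (1/(m-1)))
    ((t+t₀) ^ (1/(m-1)+1))
    (η + Real.log (Real.log (t + t₀)) / 2 - Real.log r)
    r (Real.log (t+t₀)) (((n:ℝ)-1)*(ψ' r/ψ r)) hm1' hGpos.ne' hr.ne' hTpos.ne' hLpos.ne'
  rw [hdd, hd1, hdT, hκm, hGp, easm.1, easm.2]
  exact mul_le_mul_of_nonneg_left main hfac

lemma hd_in1 {C A p R₀ x : ℝ} (hR : R₀ ≠ 0) (hG : 0 < A - x^2/(2*R₀^2)) :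
    HasDerivAt (fun y => C * (A - y^2/(2*R₀^2)) ^ (p+1))
      (-(C * (p+1) * (A - x^2/(2*R₀^2)) ^ p * x / R₀^2)) x := by
  have h0 : HasDerivAt (fun y => A - y^2/(2*R₀^2)) (-(x/R₀^2)) x := by
    have h := ((hasDerivAt_pow 2 x).div_const (2*R₀^2)).const_sub A
    refine h.congr_deriv ?_
    field_simp
    ring
  have h1 := (h0.rpow_const (p := p+1) (Or.inl hG.ne')).const_mul C
  refine h1.congr_deriv ?_
  rw [add_sub_cancel_right]
  ring

lemma hd_in2 {C A p R₀ x : ℝ} (hR : R₀ ≠ 0) (hG : 0 < A - x^2/(2*R₀^2)) :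
    HasDerivAt (fun y => -(C * (p+1) * (A - y^2/(2*R₀^2)) ^ p * y / R₀^2))
      (C * (p+1) * (p * (A - x^2/(2*R₀^2)) ^ (p-1) * x^2/R₀^2
        - (A - x^2/(2*R₀^2)) ^ p) / R₀^2) x := by
  have h0 : HasDerivAt (fun y => A - y^2/(2*R₀^2)) (-(x/R₀^2)) x := by
    have h := ((hasDerivAt_pow 2 x).div_const (2*R₀^2)).const_sub A
    refine h.congr_deriv ?_
    field_simp
    ring
  have h1 := (h0.rpow_const (p := p) (Or.inl hG.ne')).const_mul (C*(p+1))
  have h2 := ((h1.mul (hasDerivAt_id x)).div_const (R₀^2)).neg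
  refine h2.congr_deriv ?_
  simp only [id]
  field_simp
  ring

lemma inner_assembly (m κ Kq X T1 G r Lg D R₀ : ℝ) (hm1 : m - 1 ≠ 0)
    (hG : G ≠ 0) (hR0 : R₀ ≠ 0) (hT1 : T1 ≠ 0) (hLg : Lg ≠ 0) :
    (Kq*κ/T1 * (1/(m-1)+1) * (1/(m-1) * (X/G) * r^2/R₀^2 - X) / R₀^2
        + D * -(Kq*κ/T1 * (1/(m-1)+1) * X * r / R₀^2)
      = (κ * (1/(m-1)) * (X/G) / T1)
        * ((Kq*m)*((1/(m-1))*r^2/R₀^4 - G/R₀^2 - D*r*G/R₀^2)))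
    ∧ (κ * (1/(m-1)) * ((X/G)/(2*Lg) - X) / T1
      = (κ * (1/(m-1)) * (X/G) / T1) * (1/(2*Lg) - G)) := by
  constructor
  · field_simp
    ring
  · field_simp

set_option maxHeartbeats 1000000 in
lemma inner_region
    (m : ℝ) (hm : 1 < m) (n : ℕ)
    (ψ ψ' : ℝ → ℝ)
    (R₀ : ℝ) (hR0 : 0 < R₀)
    (t₀ κ η : ℝ) (hκpos : 0 < κ)
    (r t : ℝ) (hr : 0 < r) (hlt : r < R₀)
    (hT : 0 < t + t₀) (hLpos : 0 < Real.log (t+t₀))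
    (hGpos : 0 < (η + Real.log (Real.log (t + t₀)) / 2 - Real.log R₀ + 1/2)
      - r^2/(2*R₀^2))
    (main : (κ^(m-1)*m)*((1/(m-1))*r^2/R₀^4
        - ((η + Real.log (Real.log (t + t₀)) / 2 - Real.log R₀ + 1/2) - r^2/(2*R₀^2))/R₀^2
        - (((n:ℝ)-1)*(ψ' r/ψ r))*r
          *((η + Real.log (Real.log (t + t₀)) / 2 - Real.log R₀ + 1/2) - r^2/(2*R₀^2))/R₀^2)
        ≤ 1/(2*Real.log (t+t₀))
          - ((η + Real.log (Real.log (t + t₀)) / 2 - Real.log R₀ + 1/2) - r^2/(2*R₀^2))) :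
    deriv (deriv (fun x => (UbarCrit m R₀ t₀ κ η x t) ^ m)) r
      + ((n : ℝ) - 1) * (ψ' r / ψ r)
        * deriv (fun x => (UbarCrit m R₀ t₀ κ η x t) ^ m) r
      ≤ deriv (fun s => UbarCrit m R₀ t₀ κ η r s) t := by
  have hm1 : (0:ℝ) < m - 1 := by linarith
  have hm1' : m - 1 ≠ 0 := hm1.ne'
  have hp : (0:ℝ) < 1/(m-1) := by positivity
  -- eventually facts
  have ev1 : ∀ᶠ x in nhds r, x < R₀ := eventually_lt_nhds hlt
  have hcont : Continuous (fun x : ℝ =>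
      (η + Real.log (Real.log (t + t₀)) / 2 - Real.log R₀ + 1/2) - x^2/(2*R₀^2)) :=
    continuous_const.sub ((continuous_pow 2).div_const (2*R₀^2))
  have ev3 : ∀ᶠ x in nhds r,
      0 < (η + Real.log (Real.log (t + t₀)) / 2 - Real.log R₀ + 1/2) - x^2/(2*R₀^2) :=
    hcont.continuousAt.eventually (eventually_gt_nhds hGpos)
  -- spatial eventual equality
  have heq : (fun x => (UbarCrit m R₀ t₀ κ η x t) ^ m) =ᶠ[nhds r]
      (fun x => (κ^m/(t+t₀)^(1/(m-1)+1))
        * ((η + Real.log (Real.log (t + t₀)) / 2 - Real.log R₀ + 1/2)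
            - x^2/(2*R₀^2)) ^ (1/(m-1)+1)) := by
    filter_upwards [ev1, ev3] with x hx1 hx3
    show (UbarCrit m R₀ t₀ κ η x t) ^ m = _
    unfold UbarCrit
    rw [if_neg (not_le.mpr hx1)]
    rw [show η + Real.log (Real.log (t + t₀)) / 2 - x ^ 2 / (2 * R₀ ^ 2) - Real.log R₀ + 1/2
        = (η + Real.log (Real.log (t + t₀)) / 2 - Real.log R₀ + 1/2) - x^2/(2*R₀^2) by ring]
    rw [max_eq_left hx3.le]
    rw [Real.div_rpow (mul_nonneg hκpos.le (Real.rpow_nonneg hx3.le _)) (Real.rpow_nonneg hT.le _)]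
    rw [Real.mul_rpow hκpos.le (Real.rpow_nonneg hx3.le _)]
    rw [← Real.rpow_mul hx3.le, ← Real.rpow_mul hT.le]
    rw [show (1/(m-1))*m = 1/(m-1)+1 by field_simp; ring]
    ring
  have hder1ev : ∀ᶠ x in nhds r, deriv (fun y => (UbarCrit m R₀ t₀ κ η y t) ^ m) x
      = -((κ^m/(t+t₀)^(1/(m-1)+1)) * (1/(m-1)+1)
          * ((η + Real.log (Real.log (t + t₀)) / 2 - Real.log R₀ + 1/2)
              - x^2/(2*R₀^2)) ^ (1/(m-1)) * x / R₀^2) := by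
    filter_upwards [heq.eventually_nhds, ev3] with x hx hx3
    exact (Filter.EventuallyEq.deriv_eq hx).trans (hd_in1 hR0.ne' hx3).deriv
  have hdd : deriv (deriv (fun x => (UbarCrit m R₀ t₀ κ η x t) ^ m)) r
      = (κ^m/(t+t₀)^(1/(m-1)+1)) * (1/(m-1)+1)
        * ((1/(m-1)) * ((η + Real.log (Real.log (t + t₀)) / 2 - Real.log R₀ + 1/2)
              - r^2/(2*R₀^2)) ^ (1/(m-1)-1) * r^2/R₀^2
          - ((η + Real.log (Real.log (t + t₀)) / 2 - Real.log R₀ + 1/2)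
              - r^2/(2*R₀^2)) ^ (1/(m-1))) / R₀^2 := by
    rw [Filter.EventuallyEq.deriv_eq hder1ev]
    exact (hd_in2 hR0.ne' hGpos).deriv
  have hd1 : deriv (fun x => (UbarCrit m R₀ t₀ κ η x t) ^ m) r
      = -((κ^m/(t+t₀)^(1/(m-1)+1)) * (1/(m-1)+1)
          * ((η + Real.log (Real.log (t + t₀)) / 2 - Real.log R₀ + 1/2)
              - r^2/(2*R₀^2)) ^ (1/(m-1)) * r / R₀^2) :=
    heq.deriv_eq.trans (hd_in1 hR0.ne' hGpos).deriv
  -- time derivative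
  have hGc : 0 < η + Real.log (Real.log (t+t₀))/2 - (r^2/(2*R₀^2) + Real.log R₀ - 1/2) := by
    linarith
  have hs : HasDerivAt (fun s : ℝ => s + t₀) 1 t := (hasDerivAt_id t).add_const t₀
  have hΓc : ContinuousAt
      (fun s => η + Real.log (Real.log (s+t₀))/2 - (r^2/(2*R₀^2) + Real.log R₀ - 1/2)) t :=
    ((((hs.log hT.ne').log hLpos.ne').div_const 2).const_add η).sub_const
      (r^2/(2*R₀^2) + Real.log R₀ - 1/2) |>.continuousAt
  have ev4 : ∀ᶠ s in nhds t,
      0 < η + Real.log (Real.log (s+t₀))/2 - (r^2/(2*R₀^2) + Real.log R₀ - 1/2) :=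
    hΓc.eventually (eventually_gt_nhds hGc)
  have heqT : (fun s => UbarCrit m R₀ t₀ κ η r s) =ᶠ[nhds t]
      (fun s => κ * (η + Real.log (Real.log (s+t₀))/2
          - (r^2/(2*R₀^2) + Real.log R₀ - 1/2)) ^ (1/(m-1))
        / (s+t₀) ^ (1/(m-1))) := by
    filter_upwards [ev4] with s hs4
    show UbarCrit m R₀ t₀ κ η r s = _
    unfold UbarCrit
    rw [if_neg (not_le.mpr hlt)]
    rw [show η + Real.log (Real.log (s + t₀)) / 2 - r ^ 2 / (2 * R₀ ^ 2) - Real.log R₀ + 1/2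
        = η + Real.log (Real.log (s+t₀))/2 - (r^2/(2*R₀^2) + Real.log R₀ - 1/2) by ring]
    rw [max_eq_left hs4.le]
  have hdT : deriv (fun s => UbarCrit m R₀ t₀ κ η r s) t
      = κ * (1/(m-1)) * ((η + Real.log (Real.log (t+t₀))/2
            - (r^2/(2*R₀^2) + Real.log R₀ - 1/2)) ^ (1/(m-1)-1) / (2*Real.log (t+t₀))
        - (η + Real.log (Real.log (t+t₀))/2
            - (r^2/(2*R₀^2) + Real.log R₀ - 1/2)) ^ (1/(m-1)))
        / (t+t₀) ^ (1/(m-1)+1) :=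
    heqT.deriv_eq.trans (hd_time hT hLpos hGc).deriv
  rw [show η + Real.log (Real.log (t+t₀))/2 - (r^2/(2*R₀^2) + Real.log R₀ - 1/2)
      = (η + Real.log (Real.log (t + t₀)) / 2 - Real.log R₀ + 1/2) - r^2/(2*R₀^2) by ring] at hdT
  -- assembly
  have hκm : κ^m = κ^(m-1)*κ := by
    rw [show κ^m = κ^((m-1)+1) by norm_num, Real.rpow_add_one hκpos.ne']
  have hGp : ((η + Real.log (Real.log (t + t₀)) / 2 - Real.log R₀ + 1/2)
        - r^2/(2*R₀^2)) ^ (1/(m-1)-1)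
      = ((η + Real.log (Real.log (t + t₀)) / 2 - Real.log R₀ + 1/2)
          - r^2/(2*R₀^2)) ^ (1/(m-1))
        / ((η + Real.log (Real.log (t + t₀)) / 2 - Real.log R₀ + 1/2) - r^2/(2*R₀^2)) := by
    rw [Real.rpow_sub hGpos, Real.rpow_one]
  have hXpos : 0 < ((η + Real.log (Real.log (t + t₀)) / 2 - Real.log R₀ + 1/2)
      - r^2/(2*R₀^2)) ^ (1/(m-1)) := Real.rpow_pos_of_pos hGpos _
  have hTpos : 0 < (t+t₀) ^ (1/(m-1)+1) := Real.rpow_pos_of_pos hT _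
  have hfac : 0 ≤ κ * (1/(m-1))
      * (((η + Real.log (Real.log (t + t₀)) / 2 - Real.log R₀ + 1/2)
          - r^2/(2*R₀^2)) ^ (1/(m-1))
        / ((η + Real.log (Real.log (t + t₀)) / 2 - Real.log R₀ + 1/2) - r^2/(2*R₀^2)))
      / (t+t₀) ^ (1/(m-1)+1) := by positivity
  have easm := inner_assembly m κ (κ^(m-1))
    (((η + Real.log (Real.log (t + t₀)) / 2 - Real.log R₀ + 1/2)
        - r^2/(2*R₀^2)) ^ (1/(m-1)))
    ((t+t₀) ^ (1/(m-1)+1))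
    ((η + Real.log (Real.log (t + t₀)) / 2 - Real.log R₀ + 1/2) - r^2/(2*R₀^2))
    r (Real.log (t+t₀)) (((n:ℝ)-1)*(ψ' r/ψ r)) R₀ hm1' hGpos.ne' hR0.ne' hTpos.ne' hLpos.ne'
  rw [hdd, hd1, hdT, hκm, hGp, easm.1, easm.2]
  apply mul_le_mul_of_nonneg_left ?_ hfac
  calc (κ^(m-1)*m)*((1/(m-1))*r^2/R₀^4
        - ((η + Real.log (Real.log (t + t₀)) / 2 - Real.log R₀ + 1/2) - r^2/(2*R₀^2))/R₀^2
        - (((n:ℝ)-1)*(ψ' r/ψ r))*r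
          *((η + Real.log (Real.log (t + t₀)) / 2 - Real.log R₀ + 1/2) - r^2/(2*R₀^2))/R₀^2)
      ≤ 1/(2*Real.log (t+t₀))
          - ((η + Real.log (Real.log (t + t₀)) / 2 - Real.log R₀ + 1/2) - r^2/(2*R₀^2)) := main
    _ = _ := rfl

set_option maxHeartbeats 1000000 in
lemma core_outer {p K c L R₀ r G D η : ℝ}
    (hp : 0 < p) (hK : 0 < K) (hc : 0 < c) (hG : 0 < G)
    (hR2 : 2 ≤ R₀) (hRbar : 4*p ≤ c*R₀^2)
    (hr : R₀ ≤ r) (hL : R₀^2 < L)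
    (hKc : 2 ≤ K*c)
    (hD : 1 + c*r ≤ D)
    (hexp : 2*(K*p) ≤ Real.exp (2*η))
    (hGr : r^2 = Real.exp (2*η) * L * Real.exp (-(2*G))) :
    K*((p+G)/r^2 - D*G/r) ≤ 1/(2*L) - G := by
  have hr0 : 0 < r := lt_of_lt_of_le (by linarith) hr
  have hR0 : (0:ℝ) < R₀ := by linarith
  have hLpos : 0 < L := lt_trans (by positivity) hL
  have key : K*p/r^2 ≤ 1/(2*L) + (K*c-1)*G := by
    rcases le_or_gt (Real.exp (2*G)) L with hE | hE
    · have hid : Real.exp (2*G) * Real.exp (-(2*G)) = 1 := by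
        rw [← Real.exp_add]; simp
      have s1 : K*p/r^2 ≤ Real.exp (2*G)/(2*L) := by
        rw [div_le_div_iff₀ (by positivity) (by positivity), hGr]
        have e : Real.exp (2*G) * (Real.exp (2*η) * L * Real.exp (-(2*G)))
            = Real.exp (2*η) * L := by
          rw [show Real.exp (2*G) * (Real.exp (2*η) * L * Real.exp (-(2*G)))
              = (Real.exp (2*G) * Real.exp (-(2*G))) * (Real.exp (2*η) * L) from by ring,
            hid, one_mul]
        calc K*p*(2*L) ≤ Real.exp (2*η) * L := by
              nlinarith [mul_le_mul_of_nonneg_right hexp hLpos.le]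
          _ = Real.exp (2*G) * (Real.exp (2*η) * L * Real.exp (-(2*G))) := e.symm
      have s2 : Real.exp (2*G) ≤ 1 + 2*G*Real.exp (2*G) := by
        nlinarith [Real.add_one_le_exp (-(2*G)), Real.exp_pos (2*G), hid]
      have s2b : Real.exp (2*G) ≤ 1 + 2*G*L := by
        nlinarith [hE, hG.le]
      have s3 : Real.exp (2*G)/(2*L) ≤ 1/(2*L) + G := by
        calc Real.exp (2*G)/(2*L) ≤ (1 + 2*G*L)/(2*L) :=
              (div_le_div_iff_of_pos_right (by positivity)).mpr s2b
          _ = 1/(2*L) + G := by field_simp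
      have s4 : 1/(2*L) + G ≤ 1/(2*L) + (K*c-1)*G := by nlinarith [hKc, hG.le]
      linarith
    · have hG2 : Real.log R₀ ≤ G := by
        have h1 : Real.log L < 2*G := by
          rw [← Real.log_exp (2*G)]; exact Real.log_lt_log hLpos hE
        have h2 : Real.log (R₀^2) ≤ Real.log L := Real.log_le_log (by positivity) hL.le
        rw [Real.log_pow] at h2
        push_cast at h2
        linarith
      have hlog2 : (1:ℝ)/2 ≤ Real.log R₀ := by
        have := Real.log_le_log (by norm_num) hR2
        nlinarith [Real.log_two_gt_d9]
      have hKp : K*p/r^2 ≤ K*p/R₀^2 := by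
        apply div_le_div_of_nonneg_left (by positivity) (by positivity)
        nlinarith
      have hfin : K*p/R₀^2 ≤ (K*c-1)*G := by
        rw [div_le_iff₀ (by positivity)]
        have f1 : 0 ≤ (K*c - 2)*(G*R₀^2) := mul_nonneg (by linarith) (by positivity)
        have f2 : 0 ≤ (G - 1/2)*(K*c*R₀^2) := mul_nonneg (by linarith) (by positivity)
        have f3 : K*(4*p) ≤ K*(c*R₀^2) := mul_le_mul_of_nonneg_left hRbar hK.le
        nlinarith [f1, f2, f3]
      have t5 : 0 < 1/(2*L) := by positivity
      linarith
  have h1 : K*((p+G)/r^2 - D*G/r) = (K*(p+G) - K*D*G*r)/r^2 := by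
    field_simp
  have h2 : (K*(p+G) - K*D*G*r)/r^2 ≤ (K*p - K*c*G*r^2)/r^2 := by
    apply (div_le_div_iff_of_pos_right (by positivity)).mpr
    have f1 : K*G*r*(1+c*r) ≤ K*G*r*D :=
      mul_le_mul_of_nonneg_left hD (by positivity)
    have f2 : K*G*1 ≤ K*G*r :=
      mul_le_mul_of_nonneg_left (by linarith) (by positivity)
    nlinarith [f1, f2]
  have h3 : (K*p - K*c*G*r^2)/r^2 = K*p/r^2 - K*c*G := by
    field_simp
  rw [h1]
  calc (K*(p+G) - K*D*G*r)/r^2 ≤ (K*p - K*c*G*r^2)/r^2 := h2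
    _ = K*p/r^2 - K*c*G := h3
    _ ≤ 1/(2*L) - G := by linarith

set_option maxHeartbeats 1000000 in
lemma core_inner {p K L R₀ r G D E : ℝ}
    (hp : 0 < p) (hK : 0 < K) (hG : 0 < G) (hr0 : 0 < r) (hr : r < R₀) (hR1 : 1 ≤ R₀)
    (hLpos : 0 < L)
    (hKE : 2*R₀^2 ≤ K*(E+1))
    (hηG : K*p/(K*(E+1) - R₀^2) ≤ G)
    (hDE : E ≤ D*r) :
    K*(p*r^2/R₀^4 - G/R₀^2 - D*r*G/R₀^2) ≤ 1/(2*L) - G := by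
  have hR0 : (0:ℝ) < R₀ := by linarith
  have hd : 0 < K*(E+1) - R₀^2 := by nlinarith [sq_nonneg R₀]
  have hKpG : K*p ≤ (K*(E+1) - R₀^2)*G := by
    have h := (div_le_iff₀ hd).mp hηG
    linarith
  calc K*(p*r^2/R₀^4 - G/R₀^2 - D*r*G/R₀^2)
      ≤ K*(p*R₀^2/R₀^4 - G/R₀^2 - E*G/R₀^2) := by
        apply mul_le_mul_of_nonneg_left _ hK.le
        have t1 : p*r^2/R₀^4 ≤ p*R₀^2/R₀^4 := by
          apply (div_le_div_iff_of_pos_right (by positivity)).mpr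
          nlinarith [mul_le_mul_of_nonneg_left (show r^2 ≤ R₀^2 by nlinarith) hp.le]
        have t2 : E*G/R₀^2 ≤ D*r*G/R₀^2 := by
          apply (div_le_div_iff_of_pos_right (by positivity)).mpr
          exact mul_le_mul_of_nonneg_right hDE hG.le
        linarith
    _ = K*p/R₀^2 - (K*(E+1))*G/R₀^2 := by field_simp; ring
    _ ≤ 1/(2*L) - G := by
        have t3 : K*p/R₀^2 ≤ ((K*(E+1) - R₀^2)*G)/R₀^2 :=
          (div_le_div_iff_of_pos_right (by positivity)).mpr hKpG
        have t4 : ((K*(E+1) - R₀^2)*G)/R₀^2 = K*(E+1)*G/R₀^2 - G := by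
          field_simp
        have t5 : 0 < 1/(2*L) := by positivity
        linarith

set_option maxHeartbeats 1000000 in
/-- Lemma 5.1 of the paper. In the critical case of quadratic
curvature (`w(r) = Q r²` for large `r`), under the stated conditions on
`R₀, E, t₀, κ, η`, the barrier `Ū` is a pointwise supersolution of the radial porous
medium equation `u_t = (u^m)_{rr} + (n-1)(ψ'/ψ)(u^m)_r` at every point of positivity
off `r = R₀`. -/
theorem stmt_5
    (m : ℝ) (hm : 1 < m) (n : ℕ) (hn : 2 ≤ n)
    (R Q : ℝ) (hR : 0 < R) (hQ : 0 < Q)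
    (w ψ ψ' : ℝ → ℝ)
    (hw : ∀ r : ℝ, 0 ≤ r →
      w r = if r ≤ R then 0
            else if r ≤ 2 * R then Q * (2 * R) ^ 2 / R * (r - R)
            else Q * r ^ 2)
    (hψ0 : ψ 0 = 0) (hψ'0 : ψ' 0 = 1)
    (hd1 : ∀ r ∈ Set.Ici (0 : ℝ), HasDerivWithinAt ψ (ψ' r) (Set.Ici 0) r)
    (hd2 : ∀ r ∈ Set.Ici (0 : ℝ), HasDerivWithinAt ψ' (w r * ψ r) (Set.Ici 0) r) :
    ∃ Rbar : ℝ, 0 < Rbar ∧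
      ∀ R₀ : ℝ, Rbar ≤ R₀ →
      ∀ E : ℝ, 0 < E →
        (∀ r ∈ Set.Ioo (0 : ℝ) R₀, E ≤ ((n : ℝ) - 1) * ψ' r * r / ψ r) →
        (∀ r : ℝ, R₀ ≤ r →
          ((n : ℝ) - 1) * Real.sqrt (Q / 2) / r
            ≤ ((n : ℝ) - 1) * ψ' r / (ψ r * r ^ 2) - 1 / r ^ 2) →
      ∀ t₀ κ η : ℝ,
        Real.exp (R₀ ^ 2) < t₀ →
        max ((2 / (m * ((n : ℝ) - 1) * Real.sqrt (Q / 2))) ^ (1 / (m - 1)))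
            ((2 * R₀ ^ 2 / (m * (E + 1))) ^ (1 / (m - 1))) ≤ κ →
        (1 / 2) * max (Real.log (2 * m * κ ^ (m - 1) / (m - 1)))
            (2 * m * κ ^ (m - 1) /
              ((m - 1) * (m * (E + 1) * κ ^ (m - 1) - R₀ ^ 2))) ≤ η →
      ∀ r t : ℝ, 0 < r → r ≠ R₀ → 0 < t → 0 < UbarCrit m R₀ t₀ κ η r t →
        deriv (deriv (fun x => (UbarCrit m R₀ t₀ κ η x t) ^ m)) r
          + ((n : ℝ) - 1) * (ψ' r / ψ r)
            * deriv (fun x => (UbarCrit m R₀ t₀ κ η x t) ^ m) r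
          ≤ deriv (fun s => UbarCrit m R₀ t₀ κ η r s) t := by
  have hm1 : (0:ℝ) < m - 1 := by linarith
  have hm1' : m - 1 ≠ 0 := hm1.ne'
  have hm0 : (0:ℝ) < m := by linarith
  have hp : (0:ℝ) < 1/(m-1) := by positivity
  have hn1 : (1:ℝ) ≤ (n:ℝ) - 1 := by
    have : (2:ℝ) ≤ (n:ℝ) := by exact_mod_cast hn
    linarith
  have hsq : 0 < Real.sqrt (Q/2) := Real.sqrt_pos.mpr (by linarith)
  have hc : 0 < ((n:ℝ)-1)*Real.sqrt (Q/2) := mul_pos (by linarith) hsq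
  have hy : 0 < 4*(1/(m-1))/(((n:ℝ)-1)*Real.sqrt (Q/2)) :=
    div_pos (by linarith) hc
  refine ⟨2 + 4*(1/(m-1))/(((n:ℝ)-1)*Real.sqrt (Q/2)), by linarith, ?_⟩
  intro R₀ hR₀ E hE hinner houter t₀ κ η ht₀ hκmax hη r t hr hrne ht hU
  have hR2 : (2:ℝ) ≤ R₀ := le_trans (by linarith) hR₀
  have hR0pos : (0:ℝ) < R₀ := by linarith
  -- κ facts
  have hκpos : 0 < κ := by
    have hb1 : 0 < 2/(m*((n:ℝ)-1)*Real.sqrt (Q/2)) :=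
      div_pos two_pos (by nlinarith)
    exact lt_of_lt_of_le (Real.rpow_pos_of_pos hb1 _) (le_trans (le_max_left _ _) hκmax)
  have hκq : 0 < κ^(m-1) := Real.rpow_pos_of_pos hκpos _
  have hK : 0 < κ^(m-1)*m := mul_pos hκq hm0
  have hstep : ∀ x:ℝ, 0 < x → x^(1/(m-1)) ≤ κ → x ≤ κ^(m-1) := by
    intro x hx h
    have h2 : (x^(1/(m-1)))^(m-1) ≤ κ^(m-1) :=
      Real.rpow_le_rpow (Real.rpow_nonneg hx.le _) h (by linarith)
    rwa [← Real.rpow_mul hx.le, show (1/(m-1))*(m-1) = 1 by field_simp, Real.rpow_one] at h2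
  have hKc : 2 ≤ (κ^(m-1)*m)*(((n:ℝ)-1)*Real.sqrt (Q/2)) := by
    have hden : 0 < m*((n:ℝ)-1)*Real.sqrt (Q/2) := by nlinarith
    have h1 := hstep _ (div_pos two_pos hden) (le_trans (le_max_left _ _) hκmax)
    rw [div_le_iff₀ hden] at h1
    nlinarith [h1]
  have hKE : 2*R₀^2 ≤ (κ^(m-1)*m)*(E+1) := by
    have hden : 0 < m*(E+1) := by nlinarith
    have h1 := hstep _ (div_pos (by positivity) hden) (le_trans (le_max_right _ _) hκmax)
    rw [div_le_iff₀ hden] at h1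
    nlinarith [h1]
  -- η facts
  have hexp : 2*((κ^(m-1)*m)*(1/(m-1))) ≤ Real.exp (2*η) := by
    have ha : Real.log (2*m*κ^(m-1)/(m-1)) ≤ 2*η := by
      have h1 := le_trans (mul_le_mul_of_nonneg_left (le_max_left
        (Real.log (2*m*κ^(m-1)/(m-1)))
        (2*m*κ^(m-1)/((m-1)*(m*(E+1)*κ^(m-1) - R₀^2)))) (by norm_num : (0:ℝ) ≤ 1/2)) hη
      linarith
    have hbpos : 0 < 2*m*κ^(m-1)/(m-1) :=
      div_pos (by positivity) hm1
    calc 2*((κ^(m-1)*m)*(1/(m-1))) = 2*m*κ^(m-1)/(m-1) := by ring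
      _ = Real.exp (Real.log (2*m*κ^(m-1)/(m-1))) := (Real.exp_log hbpos).symm
      _ ≤ Real.exp (2*η) := Real.exp_le_exp.mpr ha
  have hD0 : 0 < (κ^(m-1)*m)*(E+1) - R₀^2 := by nlinarith [hKE]
  have hη2 : (κ^(m-1)*m)*(1/(m-1))/((κ^(m-1)*m)*(E+1) - R₀^2) ≤ η := by
    have hb := le_trans (mul_le_mul_of_nonneg_left (le_max_right
      (Real.log (2*m*κ^(m-1)/(m-1)))
      (2*m*κ^(m-1)/((m-1)*(m*(E+1)*κ^(m-1) - R₀^2)))) (by norm_num : (0:ℝ) ≤ 1/2)) hη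
    have heqb : (1/2)*(2*m*κ^(m-1)/((m-1)*(m*(E+1)*κ^(m-1) - R₀^2)))
        = (κ^(m-1)*m)*(1/(m-1))/((κ^(m-1)*m)*(E+1) - R₀^2) := by
      rw [show m*(E+1)*κ^(m-1) - R₀^2 = (κ^(m-1)*m)*(E+1) - R₀^2 by ring]
      field_simp
    linarith [heqb ▸ hb]
  -- time facts
  have ht₀pos : 0 < t₀ := lt_trans (Real.exp_pos _) ht₀
  have hT : 0 < t + t₀ := by linarith
  have hLgt : R₀^2 < Real.log (t+t₀) :=
    (Real.lt_log_iff_exp_lt hT).mpr (by linarith)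
  have hLpos : 0 < Real.log (t+t₀) := lt_of_le_of_lt (by positivity) hLgt
  rcases lt_or_gt_of_ne hrne with hlt | hgt
  · -- inner region
    have hGpos0 : 0 < η + Real.log (Real.log (t + t₀)) / 2 - r ^ 2 / (2 * R₀ ^ 2)
        - Real.log R₀ + 1/2 := by
      by_contra hng
      push_neg at hng
      unfold UbarCrit at hU
      rw [if_neg (not_le.mpr hlt), max_eq_right hng, Real.zero_rpow hp.ne'] at hU
      simp at hU
    have hGpos : 0 < (η + Real.log (Real.log (t + t₀)) / 2 - Real.log R₀ + 1/2)
        - r^2/(2*R₀^2) := by linarith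
    -- G ≥ η
    have h5 : 2*Real.log R₀ ≤ Real.log (Real.log (t+t₀)) := by
      have h := Real.log_le_log (by positivity) hLgt.le
      rw [Real.log_pow] at h
      push_cast at h
      linarith
    have h6 : r^2/(2*R₀^2) ≤ 1/2 := by
      rw [div_le_iff₀ (by positivity)]
      nlinarith
    have hGη : η ≤ (η + Real.log (Real.log (t + t₀)) / 2 - Real.log R₀ + 1/2)
        - r^2/(2*R₀^2) := by linarith
    have hDE : E ≤ (((n:ℝ)-1)*(ψ' r/ψ r))*r := by
      have h := hinner r ⟨hr, hlt⟩
      have e4 : ((n:ℝ)-1)*ψ' r*r/ψ r = (((n:ℝ)-1)*(ψ' r/ψ r))*r := by ring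
      linarith [e4 ▸ h]
    exact inner_region m hm n ψ ψ' R₀ hR0pos t₀ κ η hκpos r t hr hlt hT hLpos hGpos
      (core_inner hp hK hGpos hr hlt (by linarith) hLpos hKE
        (le_trans hη2 hGη) hDE)
  · -- outer region
    have hle : R₀ ≤ r := hgt.le
    have hGpos : 0 < η + Real.log (Real.log (t + t₀)) / 2 - Real.log r := by
      by_contra hng
      push_neg at hng
      unfold UbarCrit at hU
      rw [if_pos hle, max_eq_right hng, Real.zero_rpow hp.ne'] at hU
      simp at hU
    have hD : 1 + (((n:ℝ)-1)*Real.sqrt (Q/2))*r ≤ ((n:ℝ)-1)*(ψ' r/ψ r) := by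
      have h := houter r hle
      have e1 : ((n:ℝ)-1)*ψ' r/(ψ r * r^2) = (((n:ℝ)-1)*(ψ' r/ψ r))/r^2 := by ring
      rw [e1] at h
      have h2 := mul_le_mul_of_nonneg_right h (sq_nonneg r)
      have e2 : ((n:ℝ)-1)*Real.sqrt (Q/2)/r*r^2 = (((n:ℝ)-1)*Real.sqrt (Q/2))*r := by
        field_simp
      have e3 : ((((n:ℝ)-1)*(ψ' r/ψ r))/r^2 - 1/r^2)*r^2 = ((n:ℝ)-1)*(ψ' r/ψ r) - 1 := by
        rw [sub_mul, div_mul_cancel₀ _ (pow_ne_zero 2 hr.ne'),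
          div_mul_cancel₀ _ (pow_ne_zero 2 hr.ne')]
      rw [e2, e3] at h2
      linarith
    have hRbar' : 4*(1/(m-1)) ≤ (((n:ℝ)-1)*Real.sqrt (Q/2))*R₀^2 := by
      have h7 : 4*(1/(m-1))/(((n:ℝ)-1)*Real.sqrt (Q/2)) ≤ R₀ := by linarith
      have h8 : 4*(1/(m-1)) ≤ R₀*(((n:ℝ)-1)*Real.sqrt (Q/2)) := (div_le_iff₀ hc).mp h7
      nlinarith [h8, mul_nonneg (mul_nonneg hc.le (by linarith : (0:ℝ) ≤ R₀))
        (by linarith : (0:ℝ) ≤ R₀ - 1)]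
    have hGr : r^2 = Real.exp (2*η) * Real.log (t+t₀)
        * Real.exp (-(2*(η + Real.log (Real.log (t + t₀)) / 2 - Real.log r))) := by
      have h1 : Real.exp (2*η) * Real.log (t+t₀)
          * Real.exp (-(2*(η + Real.log (Real.log (t + t₀)) / 2 - Real.log r)))
          = Real.exp (2*η) * Real.exp (Real.log (Real.log (t+t₀)))
            * Real.exp (-(2*(η + Real.log (Real.log (t + t₀)) / 2 - Real.log r))) := by
        rw [Real.exp_log hLpos]
      rw [h1, ← Real.exp_add, ← Real.exp_add]
      rw [show 2*η + Real.log (Real.log (t+t₀))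
          + -(2*(η + Real.log (Real.log (t + t₀)) / 2 - Real.log r))
          = Real.log r + Real.log r by ring]
      rw [Real.exp_add, Real.exp_log hr]
      ring
    exact outer_region m hm n ψ ψ' R₀ t₀ κ η hκpos r t hr hgt hT hLpos hGpos
      (core_outer hp hK hc hGpos hR2 hRbar' hle hLgt hKc hD hexp hGr)
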